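/- Let M be a k×k positive semidefinite matrix and ρ, ρ̂ density matrices with tr(Mρ) > 0 and tr(Mρ̂) > 0. Then (√M ρ √M)/tr(Mρ) = (√M ρ̂ √M)/tr(Mρ̂) if and only if there exists λ > 0 such that π ρ̂ π = λ · π ρ π, where π is the orthogonal projection onto the range (support) of M. -/

import Mathlib

/-!
Write `S = √M`, a Hermitian matrix with `S * S = M`, so `S` and `π` are Hermitian with the same
kernel. For two such matrices `A`, `B` one has `A X A = 0 → B X B = 0`: the kernel inclusion gives
`B X A = 0`, taking adjoints `A Xᴴ B = 0`, hence `B Xᴴ B = 0`, i.e. `B X B = 0`. Applied to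
`X = ρ̂ - c ρ` this turns `S ρ̂ S = c S ρ S` into `π ρ̂ π = c π ρ π`. Taking traces, the
normalisation forces `c = tr(M ρ̂) / tr(M ρ)`, which is real and positive since
`tr(M ρ) = tr(S ρ S) ≥ 0`.
-/

open scoped ComplexOrder Classical
open Matrix

/-- The positive semidefinite square root of a matrix (junk value `0` if not PSD). -/
noncomputable def msqrt {k : ℕ} (M : Matrix (Fin k) (Fin k) ℂ) : Matrix (Fin k) (Fin k) ℂ :=
  if h : M.PosSemidef then
    h.1.eigenvectorUnitary.1 * diagonal (((↑) : ℝ → ℂ) ∘ (Real.sqrt ·) ∘ h.1.eigenvalues) *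
      (star h.1.eigenvectorUnitary : Matrix (Fin k) (Fin k) ℂ)
  else 0

/-- The quantum fidelity `F(ρ,σ) = (tr √(√ρ σ √ρ))²`. -/
noncomputable def fid {k : ℕ} (ρ σ : Matrix (Fin k) (Fin k) ℂ) : ℝ :=
  ((msqrt (msqrt ρ * σ * msqrt ρ)).trace).re ^ 2

/-- A density matrix: positive semidefinite with trace one. -/
def IsDensityMatrix {k : ℕ} (ρ : Matrix (Fin k) (Fin k) ℂ) : Prop :=
  ρ.PosSemidef ∧ ρ.trace = 1

open scoped MatrixOrder

namespace Matrix

section KernelComparison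

variable {R : Type*} [CommRing R]

lemma mul_eq_zero_of_ker_le {l l' m p : Type*} [Fintype m] [Fintype p] {A : Matrix l m R}
    {B : Matrix l' m R} {Y : Matrix m p R} (hAB : ∀ x, A *ᵥ x = 0 → B *ᵥ x = 0)
    (h : A * Y = 0) : B * Y = 0 := by
  rw [ext_iff_mulVec] at h ⊢
  intro v
  simpa [← mulVec_mulVec] using hAB _ (by simpa [← mulVec_mulVec] using h v)

variable {n : Type*} [Fintype n] [StarRing R]

lemma conj_eq_zero_of_ker_le {A B X : Matrix n n R} (hA : A.IsHermitian) (hB : B.IsHermitian)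
    (hAB : ∀ x, A *ᵥ x = 0 → B *ᵥ x = 0) (h : A * X * A = 0) : B * X * B = 0 := by
  have hBXA : B * (X * A) = 0 := mul_eq_zero_of_ker_le hAB (by rwa [← mul_assoc])
  have hBXB : B * (Xᴴ * B) = 0 := mul_eq_zero_of_ker_le hAB <| by
    simpa [mul_assoc, hA.eq, hB.eq] using congrArg conjTranspose hBXA
  simpa [mul_assoc, hB.eq] using congrArg conjTranspose hBXB

lemma conj_eq_smul_conj_iff_of_ker_eq {A B : Matrix n n R} (hA : A.IsHermitian)
    (hB : B.IsHermitian) (hAB : ∀ x, A *ᵥ x = 0 ↔ B *ᵥ x = 0) (X Y : Matrix n n R) (c : R) :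
    A * Y * A = c • (A * X * A) ↔ B * Y * B = c • (B * X * B) := by
  have hsub : ∀ C : Matrix n n R, C * Y * C = c • (C * X * C) ↔ C * (Y - c • X) * C = 0 := by
    intro C
    rw [mul_sub, sub_mul, sub_eq_zero, Matrix.mul_smul, Matrix.smul_mul]
  rw [hsub, hsub]
  exact ⟨conj_eq_zero_of_ker_le hA hB fun x => (hAB x).1,
    conj_eq_zero_of_ker_le hB hA fun x => (hAB x).2⟩

end KernelComparison

variable {n 𝕜 : Type*} [Fintype n] [RCLike 𝕜] [DecidableEq n]

lemma mulVec_sqrt_eq_zero_iff {M : Matrix n n 𝕜} (hM : M.PosSemidef) (x : n → 𝕜) :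
    CFC.sqrt M *ᵥ x = 0 ↔ M *ᵥ x = 0 := by
  have hS := (CFC.sqrt_nonneg M).posSemidef.isHermitian
  rw [← conjTranspose_mul_self_mulVec_eq_zero, hS.eq, CFC.sqrt_mul_sqrt_self M hM.nonneg]

lemma PosSemidef.trace_mul_nonneg {M ρ : Matrix n n 𝕜} (hM : M.PosSemidef) (hρ : ρ.PosSemidef) :
    0 ≤ (M * ρ).trace := by
  have hS := (CFC.sqrt_nonneg M).posSemidef.isHermitian
  rw [← CFC.sqrt_mul_sqrt_self M hM.nonneg, mul_assoc, trace_mul_comm, mul_assoc]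
  simpa [hS.eq, mul_assoc] using (hρ.mul_mul_conjTranspose_same (CFC.sqrt M)).trace_nonneg

end Matrix

lemma inv_smul_eq_inv_smul_iff {K V : Type*} [Field K] [AddCommGroup V] [Module K V] {a b : K}
    (ha : a ≠ 0) (hb : b ≠ 0) (x y : V) : a⁻¹ • x = b⁻¹ • y ↔ y = (b / a) • x := by
  rw [inv_smul_eq_iff₀ ha, smul_smul, ← inv_smul_eq_iff₀ (mul_ne_zero ha (inv_ne_zero hb)), eq_comm,
    mul_inv, inv_inv, div_eq_inv_mul]

lemma msqrt_eq_sqrt {k : ℕ} {M : Matrix (Fin k) (Fin k) ℂ} (hM : M.PosSemidef) :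
    msqrt M = CFC.sqrt M := by
  rw [CFC.sqrt_eq_cfc, cfc_nnreal_eq_real _ M hM.nonneg, hM.1.cfc_eq]
  simp [msqrt, hM, IsHermitian.cfc, Function.comp_def, max_eq_left (hM.eigenvalues_nonneg _)]

theorem stmt7_general {k : ℕ} (M ρ ρhat π : Matrix (Fin k) (Fin k) ℂ)
    (hM : M.PosSemidef) (hρ : IsDensityMatrix ρ) (hρhat : IsDensityMatrix ρhat)
    (htρ : 0 < ((M * ρ).trace).re) (htρhat : 0 < ((M * ρhat).trace).re)
    (hπH : π.IsHermitian)
    (hπsupp : ∀ x : Fin k → ℂ, π.mulVec x = 0 ↔ M.mulVec x = 0) :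
    ((M * ρ).trace)⁻¹ • (msqrt M * ρ * msqrt M)
      = ((M * ρhat).trace)⁻¹ • (msqrt M * ρhat * msqrt M) ↔
    ∃ lam : ℝ, 0 < lam ∧ π * ρhat * π = (lam : ℂ) • (π * ρ * π) := by
  rw [msqrt_eq_sqrt hM]
  set S := CFC.sqrt M
  have hS : S.IsHermitian := (CFC.sqrt_nonneg M).posSemidef.isHermitian
  have htrace (X : Matrix (Fin k) (Fin k) ℂ) : (S * X * S).trace = (M * X).trace := by
    rw [trace_mul_cycle, CFC.sqrt_mul_sqrt_self M hM.nonneg]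
  have hconj : ∀ c : ℂ, S * ρhat * S = c • (S * ρ * S) ↔ π * ρhat * π = c • (π * ρ * π) :=
    conj_eq_smul_conj_iff_of_ker_eq hS hπH
      (fun x => (mulVec_sqrt_eq_zero_iff hM x).trans (hπsupp x).symm) ρ ρhat
  set a := (M * ρ).trace
  set b := (M * ρhat).trace
  have ha0 : a ≠ 0 := fun h => htρ.ne' (by rw [h, Complex.zero_re])
  have hb0 : b ≠ 0 := fun h => htρhat.ne' (by rw [h, Complex.zero_re])
  rw [inv_smul_eq_inv_smul_iff ha0 hb0, hconj]
  constructor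
  · intro h
    refine ⟨b.re / a.re, div_pos htρhat htρ, ?_⟩
    rwa [Complex.ofReal_div, ← Complex.eq_re_of_ofReal_le (hM.trace_mul_nonneg hρ.1),
      ← Complex.eq_re_of_ofReal_le (hM.trace_mul_nonneg hρhat.1)]
  · rintro ⟨lam, -, h⟩
    have hlam : b / a = lam := by
      have htr := congrArg trace ((hconj lam).2 h)
      rw [htrace, trace_smul, htrace] at htr
      rwa [div_eq_iff ha0]
    rwa [hlam]

/-- The normalized conjugated states coincide iff `π ρ̂ π = λ · π ρ π` for some `λ > 0`,
where `π` is the orthogonal projection onto the support of `M`. -/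
theorem stmt7 {k : ℕ} (M ρ ρhat π : Matrix (Fin k) (Fin k) ℂ)
    (hM : M.PosSemidef) (hρ : IsDensityMatrix ρ) (hρhat : IsDensityMatrix ρhat)
    (htρ : 0 < ((M * ρ).trace).re) (htρhat : 0 < ((M * ρhat).trace).re)
    (hπH : π.IsHermitian) (hπ2 : π * π = π)
    (hπsupp : ∀ x : Fin k → ℂ, π.mulVec x = 0 ↔ M.mulVec x = 0) :
    ((M * ρ).trace)⁻¹ • (msqrt M * ρ * msqrt M)
      = ((M * ρhat).trace)⁻¹ • (msqrt M * ρhat * msqrt M) ↔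
    ∃ lam : ℝ, 0 < lam ∧ π * ρhat * π = (lam : ℂ) • (π * ρ * π) :=
  stmt7_general M ρ ρhat π hM hρ hρhat htρ htρhat hπH hπsupp
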